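/- Let F_q be a finite field of odd order and n ≥ 2 even, a_1,...,a_n ∈ F_q^*, b_1,...,b_n ∈ F_q not all zero, a_0, b_0 ∈ F_q. Set a = a_1···a_n, b = Σ b_i^2 a_i^{-1}, c = b_0^2 - a_0 b. If b = 0 and c = 0, then the number of common solutions in F_q^n of a_1 x_1^2 + ... + a_n x_n^2 = a_0 and b_1 x_1 + ... + b_n x_n = b_0 equals q^{n-2} + v(a_0) q^{(n-2)/2} χ((-1)^{n/2} a), where v(a_0) = q-1 if a_0 = 0 and v(a_0) = -1 otherwise, and χ is the quadratic character of F_q. -/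

import Mathlib

open scoped Classical in
/-- The quadratic character of a finite field. -/
noncomputable def quadChar (F : Type*) [Field F] (x : F) : ℤ :=
  if x = 0 then 0 else if IsSquare x then 1 else -1

/-!
Count the solutions with a primitive additive character `ψ` of `F`:
`q² N = ∑_{s,t} ∑_x ψ(s (Q x - a₀) + t L x)`, and the inner sum splits over the coordinates
into one-variable sums `∑_y ψ(s aᵢ y² + t bᵢ y)`. For `s ≠ 0`, completing the square gives
`ψ(-t² bᵢ² / (4 s aᵢ)) χ(s aᵢ) G` with `G` the quadratic Gauss sum; the phases multiply to
`ψ(-t² b / (4s)) = 1` because `b = 0`, and `χ(s)ⁿ = 1` because `n` is even, so the product is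
`χ(a) Gⁿ` independently of `t`. For `s = 0` the product vanishes unless `t = 0`, since some
`bᵢ ≠ 0`. Summing, `q² N = qⁿ + v(a₀) q χ(a) Gⁿ`, and `G² = χ(-1) q` finishes the computation.
-/

open Finset

lemma AddChar.map_sum_eq_prod {A M ι : Type*} [AddCommMonoid A] [CommMonoid M]
    (ψ : AddChar A M) (s : Finset ι) (f : ι → A) :
    ψ (∑ i ∈ s, f i) = ∏ i ∈ s, ψ (f i) := by
  classical
  induction s using Finset.induction_on with
  | empty => simp
  | insert i s hi ih => rw [sum_insert hi, prod_insert hi, map_add_eq_mul, ih]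

section FiniteField

variable {F E : Type*} [Field F] [Fintype F] [Field E] {ψ : AddChar F E}

theorem sum_addChar_diagonal_eq_prod {ι : Type*} [Fintype ι] [DecidableEq ι]
    (ψ : AddChar F E) (a b : ι → F) (a0 b0 s t : F) :
    ∑ x : ι → F, ψ (s * (∑ i, a i * x i ^ 2 - a0) + t * (∑ i, b i * x i - b0))
      = ψ (-(s * a0 + t * b0)) * ∏ i, ∑ y, ψ (s * a i * y ^ 2 + t * b i * y) := by
  have harg : ∀ x : ι → F, s * (∑ i, a i * x i ^ 2 - a0) + t * (∑ i, b i * x i - b0)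
      = -(s * a0 + t * b0) + ∑ i, (s * a i * x i ^ 2 + t * b i * x i) := fun x => by
    simp only [sum_add_distrib, mul_sub, mul_sum, mul_assoc]
    ring
  simp only [harg, AddChar.map_add_eq_mul, AddChar.map_sum_eq_prod, ← mul_sum,
    Fintype.prod_sum]

variable [DecidableEq F]

theorem card_sq_mul_card_filter_and_eq_sum_addChar (hψ : ψ.IsPrimitive) {α : Type*}
    [Fintype α] (f g : α → F) :
    (Fintype.card F : E) ^ 2 * #{x | f x = 0 ∧ g x = 0}
      = ∑ s, ∑ t, ∑ x, ψ (s * f x + t * g x) := by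
  have horth : ∀ u : F, ∑ s, ψ (s * u) = if u = 0 then (Fintype.card F : E) else 0 :=
    fun u => by simpa using AddChar.sum_mulShift u hψ
  calc (Fintype.card F : E) ^ 2 * #{x | f x = 0 ∧ g x = 0}
      = ∑ x, (∑ s, ψ (s * f x)) * ∑ t, ψ (t * g x) := by
        simp only [horth, ite_zero_mul_ite_zero, ← sum_filter, sum_const, nsmul_eq_mul, sq,
          mul_comm]
    _ = ∑ s, ∑ t, ∑ x, ψ (s * f x + t * g x) := by
        simp only [sum_mul_sum, AddChar.map_add_eq_mul]
        rw [sum_comm]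
        exact sum_congr rfl fun _ _ => sum_comm

variable (F E) in
noncomputable def quadraticCharIn : MulChar F E :=
  (quadraticChar F).ringHomComp (Int.castRingHom E)

local notation "χ" => quadraticCharIn F E

@[simp]
lemma quadraticCharIn_apply (u : F) : χ u = quadraticChar F u := rfl

lemma quadraticCharIn_mul_self {c : F} (hc : c ≠ 0) : χ c * χ c = 1 := by
  rw [quadraticCharIn_apply, ← Int.cast_mul, ← sq, quadraticChar_sq_one hc, Int.cast_one]

lemma quadraticCharIn_ne_one (hF : ringChar F ≠ 2) (hE : ringChar E ≠ 2) : χ ≠ 1 := by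
  intro h
  obtain ⟨u, hu⟩ := quadraticChar_exists_neg_one' hF
  have hone := MulChar.one_apply_coe (R' := E) u
  rw [← h, quadraticCharIn_apply, hu, Int.cast_neg, Int.cast_one] at hone
  exact hE (neg_one_eq_one_iff.mp hone)

theorem gaussSum_quadraticCharIn_pow_two_mul (hF : ringChar F ≠ 2) (hE : ringChar E ≠ 2)
    (hψ : ψ.IsPrimitive) (k : ℕ) :
    gaussSum χ ψ ^ (2 * k) = χ ((-1) ^ k) * (Fintype.card F : E) ^ k := by
  rw [pow_mul, gaussSum_sq (quadraticCharIn_ne_one hF hE)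
    ((quadraticChar_isQuadratic F).comp _) hψ, mul_pow, map_pow]

theorem sum_comp_sq_eq_sum_quadraticCharIn (hF : ringChar F ≠ 2) (f : F → E) :
    ∑ y, f (y ^ 2) = ∑ u, (1 + χ u) * f u := by
  rw [← sum_fiberwise_of_maps_to (fun y _ => mem_univ (y ^ 2)) (fun y => f (y ^ 2))]
  refine sum_congr rfl fun u _ => ?_
  have hroots : (#{y | y ^ 2 = u} : ℤ) = quadraticChar F u + 1 := by
    simpa [Set.toFinset_ofPred] using quadraticChar_card_sqrts hF u
  rw [sum_congr rfl fun y hy => by rw [(mem_filter.mp hy).2], sum_const, nsmul_eq_mul,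
    quadraticCharIn_apply, ← Int.cast_natCast, hroots]
  push_cast
  ring

theorem sum_addChar_mul_sq (hF : ringChar F ≠ 2) (hψ : ψ.IsPrimitive) {c : F} (hc : c ≠ 0) :
    ∑ y, ψ (c * y ^ 2) = χ c * gaussSum χ ψ := by
  have hshift : χ c * gaussSum χ (ψ.mulShift c) = gaussSum χ ψ := by
    simpa using gaussSum_mulShift χ ψ (Units.mk0 c hc)
  have htrivial : ∑ u, ψ (c * u) = 0 := by
    simpa [mul_comm, hc] using AddChar.sum_mulShift c hψ
  rw [sum_comp_sq_eq_sum_quadraticCharIn hF (fun u => ψ (c * u)), ← hshift, ← mul_assoc,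
    quadraticCharIn_mul_self hc, one_mul]
  simp only [add_mul, one_mul, sum_add_distrib, htrivial, zero_add, gaussSum,
    AddChar.mulShift_apply]

theorem sum_addChar_quadratic (hF : ringChar F ≠ 2) (hψ : ψ.IsPrimitive) {c : F} (hc : c ≠ 0)
    (d : F) : ∑ y, ψ (c * y ^ 2 + d * y) = ψ (-(d ^ 2 / (4 * c))) * (χ c * gaussSum χ ψ) := by
  have h2 : (2 : F) ≠ 0 := Ring.two_ne_zero hF
  have h4 : (4 : F) ≠ 0 := by simpa [show (4 : F) = 2 ^ 2 by norm_num] using h2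
  have hsquare : ∀ y, c * (y - d / (2 * c)) ^ 2 + d * (y - d / (2 * c))
      = -(d ^ 2 / (4 * c)) + c * y ^ 2 := fun y => by
    field_simp
    ring
  rw [← Equiv.sum_comp (Equiv.subRight (d / (2 * c)))]
  simp only [Equiv.subRight_apply, hsquare, AddChar.map_add_eq_mul, ← mul_sum,
    sum_addChar_mul_sq hF hψ hc]

theorem prod_sum_addChar_quadratic (hF : ringChar F ≠ 2) (hψ : ψ.IsPrimitive) {ι : Type*}
    [Fintype ι] (hι : Even (Fintype.card ι)) {a b : ι → F} (ha : ∀ i, a i ≠ 0)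
    (hB : ∑ i, b i ^ 2 * (a i)⁻¹ = 0) {s : F} (hs : s ≠ 0) (t : F) :
    ∏ i, ∑ y, ψ (s * a i * y ^ 2 + t * b i * y)
      = χ (∏ i, a i) * gaussSum χ ψ ^ Fintype.card ι := by
  have hphase : ∑ i, -((t * b i) ^ 2 / (4 * (s * a i)))
      = -(t ^ 2 / (4 * s)) * ∑ i, b i ^ 2 * (a i)⁻¹ := by
    rw [mul_sum]
    refine sum_congr rfl fun i _ => ?_
    field_simp [ha i]
  have hχs : χ (s ^ Fintype.card ι) = 1 := by
    obtain ⟨k, hk⟩ := hι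
    rw [map_pow, hk, ← two_mul, pow_mul, sq, quadraticCharIn_mul_self hs, one_pow]
  simp only [sum_addChar_quadratic hF hψ (mul_ne_zero hs (ha _)), prod_mul_distrib,
    ← AddChar.map_sum_eq_prod, hphase, hB, mul_zero, AddChar.map_zero_eq_one, one_mul,
    map_mul, ← map_prod, prod_const, card_univ, hχs]

theorem sum_prod_sum_addChar_linear (hψ : ψ.IsPrimitive) {ι : Type*} [Fintype ι] {b : ι → F}
    (hb : ∃ i, b i ≠ 0) :
    ∑ t, ∏ i, ∑ y, ψ (t * b i * y) = (Fintype.card F : E) ^ Fintype.card ι := by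
  obtain ⟨i₀, hi₀⟩ := hb
  have hvanish : ∀ t ≠ 0, ∏ i, ∑ y, ψ (t * b i * y) = 0 := by
    intro t ht
    refine prod_eq_zero (mem_univ i₀) ?_
    simpa [mul_comm, ht, hi₀] using AddChar.sum_mulShift (t * b i₀) hψ
  rw [Fintype.sum_eq_single 0 hvanish]
  simp

theorem card_sq_mul_card_quadric_eq (hF : ringChar F ≠ 2) (hψ : ψ.IsPrimitive) {ι : Type*}
    [Fintype ι] [DecidableEq ι] (hι : Even (Fintype.card ι)) {a b : ι → F} (ha : ∀ i, a i ≠ 0)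
    (hb : ∃ i, b i ≠ 0) (hB : ∑ i, b i ^ 2 * (a i)⁻¹ = 0) (a0 : F) :
    (Fintype.card F : E) ^ 2 * #{x : ι → F | ∑ i, a i * x i ^ 2 = a0 ∧ ∑ i, b i * x i = 0}
      = (Fintype.card F : E) ^ Fintype.card ι
        + ((if a0 = 0 then (Fintype.card F : E) else 0) - 1) * Fintype.card F
          * χ (∏ i, a i) * gaussSum χ ψ ^ Fintype.card ι := by
  have hcount := card_sq_mul_card_filter_and_eq_sum_addChar hψ
    (fun x : ι → F => ∑ i, a i * x i ^ 2 - a0) (fun x => ∑ i, b i * x i - 0)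
  simp only [sum_addChar_diagonal_eq_prod] at hcount
  simp only [sub_eq_zero, sub_zero] at hcount
  have hzero : ∑ t, ψ (-(0 * a0 + t * 0)) * ∏ i, ∑ y, ψ (0 * a i * y ^ 2 + t * b i * y)
      = (Fintype.card F : E) ^ Fintype.card ι := by
    simpa using sum_prod_sum_addChar_linear hψ hb
  have hnonzero : ∀ s ∈ ({0}ᶜ : Finset F),
      ∑ t, ψ (-(s * a0 + t * 0)) * ∏ i, ∑ y, ψ (s * a i * y ^ 2 + t * b i * y)
        = ψ (s * -a0) * (Fintype.card F * χ (∏ i, a i) * gaussSum χ ψ ^ Fintype.card ι) := by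
    intro s hs
    simp only [prod_sum_addChar_quadratic hF hψ hι ha hB (by simpa using hs), mul_zero,
      add_zero, ← mul_neg, sum_const, card_univ, nsmul_eq_mul]
    ring
  have hphase : ∑ s ∈ ({0}ᶜ : Finset F), ψ (s * -a0)
      = (if a0 = 0 then (Fintype.card F : E) else 0) - 1 := by
    have hall := Fintype.sum_eq_add_sum_compl 0 (fun s => ψ (s * -a0))
    simp only [AddChar.sum_mulShift _ hψ, zero_mul, AddChar.map_zero_eq_one, neg_eq_zero] at hall
    split_ifs at hall ⊢ <;> push_cast at hall <;> linear_combination -hall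
  rw [hcount, Fintype.sum_eq_add_sum_compl 0, hzero, sum_congr rfl hnonzero, ← sum_mul, hphase]
  ring

end FiniteField

lemma quadChar_eq_quadraticChar {F : Type*} [Field F] [Fintype F] [DecidableEq F] (x : F) :
    quadChar F x = quadraticChar F x := by
  simp only [quadChar, quadraticChar_apply, quadraticCharFun]
  congr

open scoped Classical in
theorem stmt_11_general (F : Type*) [Field F] [Fintype F] (hq : Odd (Fintype.card F))
    (n : ℕ) (hne : Even n)
    (a b : Fin n → F) (ha : ∀ i, a i ≠ 0) (hb : ∃ i, b i ≠ 0) (a0 b0 : F)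
    (hB : (∑ i, (b i) ^ 2 * (a i)⁻¹) = 0)
    (hc : b0 ^ 2 - a0 * (∑ i, (b i) ^ 2 * (a i)⁻¹) = 0) :
    (Nat.card {x : Fin n → F //
        (∑ i, a i * (x i) ^ 2) = a0 ∧ (∑ i, b i * x i) = b0} : ℤ)
      = (Fintype.card F : ℤ) ^ (n - 2)
        + (if a0 = 0 then (Fintype.card F : ℤ) - 1 else -1)
          * (Fintype.card F : ℤ) ^ ((n - 2) / 2)
          * quadChar F ((-1 : F) ^ (n / 2) * (∏ i, a i)) := by
  have hF : ringChar F ≠ 2 := fun h => by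
    have := FiniteField.even_card_of_char_two h
    rw [Nat.odd_iff] at hq
    omega
  obtain rfl : b0 = 0 := by simpa [hB] using hc
  obtain ⟨m, rfl⟩ : ∃ m, n = 2 * m + 2 := by
    obtain ⟨i, -⟩ := hb
    obtain ⟨k, rfl⟩ := hne
    exact ⟨k - 1, by have := i.pos; omega⟩
  have hψ := AddChar.FiniteField.primitiveChar_to_Complex_isPrimitive F
  have hgauss := gaussSum_quadraticCharIn_pow_two_mul hF (by simp) hψ (m + 1)
  have key := card_sq_mul_card_quadric_eq hF hψ (by rwa [Fintype.card_fin]) ha hb hB a0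
  rw [show 2 * (m + 1) = 2 * m + 2 by ring] at hgauss
  rw [Fintype.card_fin, hgauss] at key
  rw [Nat.add_sub_cancel, Nat.mul_div_cancel_left _ two_pos,
    show (2 * m + 2) / 2 = m + 1 by omega]
  apply Int.cast_injective (α := ℂ)
  apply mul_left_cancel₀ (pow_ne_zero 2 (by simp : (Fintype.card F : ℂ) ≠ 0))
  simp only [Nat.card_eq_fintype_card, Fintype.card_subtype, Int.cast_natCast, key]
  push_cast
  rw [quadChar_eq_quadraticChar, ← quadraticCharIn_apply (E := ℂ), map_mul]
  split_ifs <;> ring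

open scoped Classical in
theorem stmt_11 (F : Type*) [Field F] [Fintype F] (hq : Odd (Fintype.card F))
    (n : ℕ) (hn : 2 ≤ n) (hne : Even n)
    (a b : Fin n → F) (ha : ∀ i, a i ≠ 0) (hb : ∃ i, b i ≠ 0) (a0 b0 : F)
    (hB : (∑ i, (b i) ^ 2 * (a i)⁻¹) = 0)
    (hc : b0 ^ 2 - a0 * (∑ i, (b i) ^ 2 * (a i)⁻¹) = 0) :
    (Nat.card {x : Fin n → F //
        (∑ i, a i * (x i) ^ 2) = a0 ∧ (∑ i, b i * x i) = b0} : ℤ)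
      = (Fintype.card F : ℤ) ^ (n - 2)
        + (if a0 = 0 then (Fintype.card F : ℤ) - 1 else -1)
          * (Fintype.card F : ℤ) ^ ((n - 2) / 2)
          * quadChar F ((-1 : F) ^ (n / 2) * (∏ i, a i)) :=
  stmt_11_general F hq n hne a b ha hb a0 b0 hB hc
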